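/- Let (T1, T2) be a confluent pair of reduction operators relative to Y, let k ≥ 1 satisfy ⟨T1,T2⟩^k = ⟨T2,T1⟩^k, and let Γ1 = (id−T2)·Σ_{i odd, 1 ≤ i ≤ k−1} ⟨T2,T1⟩^i and Γ2 = (id−T1)·Σ_{i odd, 1 ≤ i ≤ k−1} ⟨T1,T2⟩^i. Let T1∨T2 be the unique reduction operator relative to Y whose kernel is ker(T1) ∩ ker(T2). If W is a subspace of KY contained in ker(T2), then Γ1 and T1∨T2 coincide on W; symmetrically, if W ⊆ ker(T1), then Γ2 and T1∨T2 coincide on W. -/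

import Mathlib

/-!
With `P = Σ_{j < k/2} (T2 T1)^j` one has `Γ1 = (1 - T2) T1 P`. Idempotence gives `T2 Γ1 = 0`, and
`T1 (1 - Γ1) = T1 (T2 T1)^{k/2}` by a telescoping geometric sum; this is `T1 ⟨T2,T1⟩^k`, which by
confluence equals `T1 ⟨T1,T2⟩^k` and so kills `ker T2` (its rightmost factor is `T2`). Hence for
`v ∈ ker T2` we get `v - Γ1 v ∈ ker T1 ∩ ker T2 = ker (T1 ∨ T2)`. On the other hand
`Γ1 v ∈ im T1 + im T2`, and the image of a reduction operator is spanned by its irreducible basis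
elements, which stay irreducible for `T1 ∨ T2`; so `T1 ∨ T2` fixes `Γ1 v`, and
`(T1 ∨ T2) v = Γ1 v`.
-/

/-- The alternating product `⟨t,s⟩^k` with `k` factors whose rightmost factor is `s`:
`⟨t,s⟩^{2i} = (ts)^i` and `⟨t,s⟩^{2i+1} = s(ts)^i`. -/
def altProd {A : Type*} [Monoid A] (t s : A) (k : ℕ) : A :=
  if Even k then (t * s) ^ (k / 2) else s * (t * s) ^ (k / 2)

/-- A *reduction operator relative to `Y`* (a finite totally ordered set): a linear projector
`T` of `KY` such that for every `y ∈ Y`, either `T(y) = y` or every element of the support of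
`T(y)` is strictly smaller than `y`. -/
def IsReductionOperator {K Y : Type*} [Field K] [Fintype Y] [LinearOrder Y]
    (T : (Y →₀ K) →ₗ[K] (Y →₀ K)) : Prop :=
  T ∘ₗ T = T ∧
    ∀ y : Y, T (Finsupp.single y 1) = Finsupp.single y 1 ∨
      ∀ z ∈ (T (Finsupp.single y 1)).support, z < y

section AltProd

variable {A : Type*}

lemma altProd_two_mul_add_one [Monoid A] (t s : A) (j : ℕ) :
    altProd t s (2 * j + 1) = s * (t * s) ^ j := by
  have hodd : ¬Even (2 * j + 1) := Nat.not_even_iff_odd.mpr (odd_two_mul_add_one j)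
  simp only [altProd, hodd, if_false]
  congr 2
  omega

lemma altProd_mul_of_isIdempotentElem [Monoid A] {t s : A} (hs : IsIdempotentElem s) {k : ℕ}
    (hk : 1 ≤ k) : altProd t s k * s = altProd t s k := by
  unfold altProd
  split_ifs with heven
  · obtain ⟨n, hn⟩ : ∃ n, k / 2 = n + 1 := Nat.exists_eq_add_one.mpr (by grind)
    rw [hn, pow_succ, mul_assoc, mul_assoc, hs.eq]
  · rw [← mul_pow_mul, mul_assoc, hs.eq]

lemma mul_altProd_of_isIdempotentElem [Monoid A] {t s : A} (hs : IsIdempotentElem s) (k : ℕ) :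
    s * altProd t s k = s * (t * s) ^ (k / 2) := by
  unfold altProd
  split_ifs
  · rfl
  · rw [← mul_assoc, hs.eq]

lemma sum_altProd_odd [Semiring A] (t s : A) (k : ℕ) :
    ∑ i ∈ (Finset.Icc 1 (k - 1)).filter (fun i => Odd i), altProd t s i =
      s * ∑ j ∈ Finset.range (k / 2), (t * s) ^ j := by
  rw [Finset.mul_sum]
  refine Finset.sum_nbij' (fun i => i / 2) (fun j => 2 * j + 1) ?_ ?_ ?_ ?_ ?_
  all_goals
    intro i hi
    simp only [Finset.mem_filter, Finset.mem_Icc, Finset.mem_range, Nat.odd_iff] at hi ⊢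
  · omega
  · omega
  · omega
  · omega
  · rw [← altProd_two_mul_add_one]
    congr
    omega

end AltProd

/-- The theorem's `Γ1` is `gammaOp T2 T1 k` and its `Γ2` is `gammaOp T1 T2 k`. -/
def gammaOp {A : Type*} [Ring A] (t s : A) (k : ℕ) : A :=
  (1 - t) * ∑ i ∈ (Finset.Icc 1 (k - 1)).filter (fun i => Odd i), altProd t s i

section GammaOp

variable {A : Type*} [Ring A] {t s : A}

lemma gammaOp_eq (t s : A) (k : ℕ) :
    gammaOp t s k = s * ∑ j ∈ Finset.range (k / 2), (t * s) ^ j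
      - t * (s * ∑ j ∈ Finset.range (k / 2), (t * s) ^ j) := by
  rw [gammaOp, sum_altProd_odd, sub_mul, one_mul]

lemma mul_gammaOp (ht : IsIdempotentElem t) (k : ℕ) : t * gammaOp t s k = 0 := by
  rw [gammaOp, ← mul_assoc, mul_sub, mul_one, ht.eq, sub_self, zero_mul]

lemma mul_one_sub_gammaOp (hs : IsIdempotentElem s) (k : ℕ) :
    s * (1 - gammaOp t s k) = s * (t * s) ^ (k / 2) := by
  calc s * (1 - gammaOp t s k)
      = s - s * (1 - t * s) * ∑ j ∈ Finset.range (k / 2), (t * s) ^ j := by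
        simp only [gammaOp_eq, mul_sub, mul_one, ← mul_assoc, hs.eq]
        noncomm_ring
    _ = s * (t * s) ^ (k / 2) := by
        rw [mul_assoc, mul_neg_geom_sum, mul_sub, mul_one, sub_sub_cancel]

end GammaOp

section Confluence

variable {R M : Type*} [Ring R] [AddCommGroup M] [Module R M] {T1 T2 U : Module.End R M}

open LinearMap Submodule

lemma gammaOp_apply_mem_sup_range (k : ℕ) (v : M) :
    gammaOp T2 T1 k v ∈ range T1 ⊔ range T2 := by
  rw [gammaOp_eq, LinearMap.sub_apply]
  exact sub_mem (mem_sup_left ⟨_, rfl⟩) (mem_sup_right ⟨_, rfl⟩)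

lemma sub_gammaOp_apply_mem_ker (h1 : IsIdempotentElem T1) (h2 : IsIdempotentElem T2) {k : ℕ}
    (hk : 1 ≤ k) (hconf : altProd T1 T2 k = altProd T2 T1 k) {v : M} (hv : v ∈ ker T2) :
    v - gammaOp T2 T1 k v ∈ ker T1 ⊓ ker T2 := by
  rw [mem_ker] at hv
  have hT1 : T1 * (1 - gammaOp T2 T1 k) = T1 * altProd T1 T2 k * T2 := by
    rw [mul_one_sub_gammaOp h1, ← mul_altProd_of_isIdempotentElem h1, ← hconf, mul_assoc,
      altProd_mul_of_isIdempotentElem h2 hk]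
  refine ⟨?_, ?_⟩
  · calc T1 (v - gammaOp T2 T1 k v) = (T1 * (1 - gammaOp T2 T1 k)) v := by
          simp only [Module.End.mul_apply, LinearMap.sub_apply, Module.End.one_apply]
      _ = 0 := by rw [hT1, Module.End.mul_apply, hv, map_zero]
  · rw [SetLike.mem_coe, mem_ker, map_sub, hv, ← Module.End.mul_apply, mul_gammaOp h2,
      LinearMap.zero_apply, sub_zero]

lemma gammaOp_apply_eq_of_mem_ker (h1 : IsIdempotentElem T1) (h2 : IsIdempotentElem T2)
    (hU : IsIdempotentElem U) (hkerU : ker U = ker T1 ⊓ ker T2)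
    (hrange : range T1 ⊔ range T2 ≤ range U) {k : ℕ} (hk : 1 ≤ k)
    (hconf : altProd T1 T2 k = altProd T2 T1 k) {v : M} (hv : v ∈ ker T2) :
    gammaOp T2 T1 k v = U v := by
  obtain ⟨w, hw⟩ := hrange (gammaOp_apply_mem_sup_range k v)
  have hfix : U (gammaOp T2 T1 k v) = gammaOp T2 T1 k v := by
    rw [← hw, ← Module.End.mul_apply, hU.eq]
  have hker := sub_gammaOp_apply_mem_ker h1 h2 hk hconf hv
  rw [← hkerU, mem_ker, map_sub, hfix, sub_eq_zero] at hker
  exact hker.symm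

end Confluence

lemma apply_mem_of_mem_supported {R α N : Type*} [Semiring R] [AddCommMonoid N] [Module R N]
    {f : (α →₀ R) →ₗ[R] N} {s : Set α} {S : Submodule R N}
    (h : ∀ a ∈ s, f (Finsupp.single a 1) ∈ S) {x : α →₀ R} (hx : x ∈ Finsupp.supported R R s) :
    f x ∈ S := by
  rw [Finsupp.supported_eq_span_single] at hx
  exact (Submodule.map_span_le f _ S).mpr (by rintro _ ⟨a, ha, rfl⟩; exact h a ha) ⟨x, hx, rfl⟩

namespace IsReductionOperator

variable {K Y : Type*} [Field K] [Fintype Y] [LinearOrder Y] {T U : (Y →₀ K) →ₗ[K] (Y →₀ K)}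

open Finsupp LinearMap

lemma isIdempotentElem (hT : IsReductionOperator T) : IsIdempotentElem T :=
  hT.1

lemma apply_apply (hT : IsReductionOperator T) (x : Y →₀ K) : T (T x) = T x :=
  LinearMap.congr_fun hT.1 x

lemma apply_single_mem_supported_Iio (hT : IsReductionOperator T) {y z : Y} (hzy : z < y) :
    T (single z 1) ∈ supported K K (Set.Iio y) := by
  rcases hT.2 z with hfix | hlt
  · rw [hfix]
    exact single_mem_supported K 1 hzy
  · exact fun a ha => (hlt a ha).trans hzy

lemma range_eq_supported (hT : IsReductionOperator T) :
    range T = supported K K {y | T (single y 1) = single y 1} := by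
  apply le_antisymm
  · have hsingle : ∀ y : Y, T (single y 1) ∈ supported K K {y | T (single y 1) = single y 1} := by
      intro y
      induction y using WellFoundedLT.induction with
      | ind y ih =>
        rcases hT.2 y with hfix | hlt
        · rw [hfix]
          exact single_mem_supported K 1 hfix
        · rw [← hT.apply_apply]
          exact apply_mem_of_mem_supported (s := Set.Iio y) ih hlt
    rintro _ ⟨x, rfl⟩
    exact apply_mem_of_mem_supported (s := Set.univ) (fun y _ => hsingle y)
      (supported_univ (R := K) (M := K) ▸ Submodule.mem_top)
  · rw [supported_eq_span_single, Submodule.span_le]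
    rintro _ ⟨y, hy, rfl⟩
    exact ⟨single y 1, hy⟩

lemma apply_single_eq_of_ker_le (hT : IsReductionOperator T) (hU : IsReductionOperator U)
    (hker : ker U ≤ ker T) {y : Y} (hy : T (single y 1) = single y 1) :
    U (single y 1) = single y 1 := by
  by_contra hne
  have hUy : U (single y 1) ∈ supported K K (Set.Iio y) := (hU.2 y).resolve_left hne
  have hTUy : T (U (single y 1)) = single y 1 := by
    have hmem : single y 1 - U (single y 1) ∈ ker U := by
      rw [mem_ker, map_sub, hU.apply_apply, sub_self]
    have := hker hmem
    rwa [mem_ker, map_sub, hy, sub_eq_zero, eq_comm] at this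
  have hmem : single y (1 : K) ∈ supported K K (Set.Iio y) := by
    rw [← hTUy]
    exact apply_mem_of_mem_supported (fun z hz => hT.apply_single_mem_supported_Iio hz) hUy
  exact lt_irrefl y (hmem (by simp))

lemma range_le_of_ker_le (hT : IsReductionOperator T) (hU : IsReductionOperator U)
    (hker : ker U ≤ ker T) : range T ≤ range U := by
  rw [hT.range_eq_supported, hU.range_eq_supported]
  exact supported_mono fun y hy => hT.apply_single_eq_of_ker_le hU hker hy

end IsReductionOperator

/-- Let `(T1, T2)` be a confluent pair of reduction operators relative to `Y`
(witnessed by `k ≥ 1` with `⟨T1,T2⟩^k = ⟨T2,T1⟩^k`), let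
`Γ1 = (id−T2)·Σ_{i odd, 1 ≤ i ≤ k−1} ⟨T2,T1⟩^i` and
`Γ2 = (id−T1)·Σ_{i odd, 1 ≤ i ≤ k−1} ⟨T1,T2⟩^i`, and let `U = T1 ∨ T2` be the (unique)
reduction operator relative to `Y` whose kernel is `ker T1 ∩ ker T2`.  If `W` is a subspace of
`KY` contained in `ker T2`, then `Γ1` and `T1 ∨ T2` coincide on `W`; symmetrically, if
`W ⊆ ker T1`, then `Γ2` and `T1 ∨ T2` coincide on `W`. -/
theorem stmt4 {K Y : Type*} [Field K] [Fintype Y] [LinearOrder Y]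
    (T1 T2 : (Y →₀ K) →ₗ[K] (Y →₀ K))
    (h1 : IsReductionOperator T1) (h2 : IsReductionOperator T2)
    (k : ℕ) (hk : 1 ≤ k) (hconf : altProd T1 T2 k = altProd T2 T1 k)
    (U : (Y →₀ K) →ₗ[K] (Y →₀ K)) (hU : IsReductionOperator U)
    (hkerU : LinearMap.ker U = LinearMap.ker T1 ⊓ LinearMap.ker T2)
    (W : Submodule K (Y →₀ K)) :
    let Γ1 := (1 - T2) * ∑ i ∈ (Finset.Icc 1 (k - 1)).filter (fun i => Odd i), altProd T2 T1 i
    let Γ2 := (1 - T1) * ∑ i ∈ (Finset.Icc 1 (k - 1)).filter (fun i => Odd i), altProd T1 T2 i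
    (W ≤ LinearMap.ker T2 → ∀ v ∈ W, Γ1 v = U v) ∧
    (W ≤ LinearMap.ker T1 → ∀ v ∈ W, Γ2 v = U v) := by
  intro Γ1 Γ2
  have hrange : LinearMap.range T1 ⊔ LinearMap.range T2 ≤ LinearMap.range U :=
    sup_le (h1.range_le_of_ker_le hU (hkerU ▸ inf_le_left))
      (h2.range_le_of_ker_le hU (hkerU ▸ inf_le_right))
  refine ⟨fun hW v hv => ?_, fun hW v hv => ?_⟩
  · exact gammaOp_apply_eq_of_mem_ker h1.isIdempotentElem h2.isIdempotentElem
      hU.isIdempotentElem hkerU hrange hk hconf (hW hv)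
  · exact gammaOp_apply_eq_of_mem_ker h2.isIdempotentElem h1.isIdempotentElem
      hU.isIdempotentElem (by rw [hkerU, inf_comm]) (by rwa [sup_comm]) hk hconf.symm (hW hv)
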